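/- Let N ≥ 1, let v_1, …, v_N ∈ ℝ^N with ‖v_i‖ ≤ 1, let Γ and Γ' be independent standard Gaussian random vectors in ℝ^N, and set X_i = ⟨v_i, Γ⟩ and X'_i = ⟨v_i, Γ'⟩ (so X' is an independent copy of X). Let M = max_{1≤i≤N} X_i, m = E[M], σ² = Var(M). For t ∈ (0,1) define the random set U_t = { i : X_i ≥ t·m }. Then for every λ > 0, P( ∃ i ∈ U_t with X'_i ≥ √(1−t²)·m + λ/√(1−t²) ) ≤ σ²/λ². -/

import Mathlib

open MeasureTheory ProbabilityTheory Real Finset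


noncomputable def stdGaussianPi (ι : Type*) [Fintype ι] : Measure (ι → ℝ) :=
  Measure.pi fun _ => gaussianReal 0 1

instance (ι : Type*) [Fintype ι] : IsProbabilityMeasure (stdGaussianPi ι) := by
  unfold stdGaussianPi; infer_instance

lemma map_withDensity_equiv {α β : Type*} [MeasurableSpace α] [MeasurableSpace β] (e : α ≃ᵐ β)
    (μ : Measure α) {f : α → ENNReal} (hf : Measurable f) :
    (μ.withDensity f).map e = (μ.map e).withDensity (f ∘ ⇑e.symm) := by
  ext A hA
  rw [Measure.map_apply e.measurable hA, withDensity_apply _ (e.measurable hA),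
      withDensity_apply _ hA, setLIntegral_map hA (hf.comp e.symm.measurable) e.measurable]
  refine setLIntegral_congr_fun (e.measurable hA) (fun x _ => ?_)
  simp

lemma gauss_prod_withDensity :
    (gaussianReal 0 1).prod (gaussianReal 0 1) =
      (volume : Measure (ℝ × ℝ)).withDensity
        (fun p => gaussianPDF 0 1 p.1 * gaussianPDF 0 1 p.2) := by
  refine Measure.prod_eq fun A B hA hB => ?_
  rw [withDensity_apply _ (hA.prod hB), Measure.volume_eq_prod ℝ ℝ, ← Measure.prod_restrict,
    lintegral_prod_mul (measurable_gaussianPDF 0 1).aemeasurable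
      (measurable_gaussianPDF 0 1).aemeasurable,
    gaussianReal_of_var_ne_zero 0 one_ne_zero, withDensity_apply _ hA, withDensity_apply _ hB]

noncomputable def rotEquiv (t s : ℝ) (hts : t ^ 2 + s ^ 2 = 1) : (ℝ × ℝ) ≃ᵐ (ℝ × ℝ) where
  toFun := fun p => (t * p.1 + s * p.2, -s * p.1 + t * p.2)
  invFun := fun p => (t * p.1 - s * p.2, s * p.1 + t * p.2)
  left_inv := fun p => by
    obtain ⟨x, y⟩ := p
    simp only [Prod.mk.injEq]
    constructor
    · linear_combination x * hts
    · linear_combination y * hts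
  right_inv := fun p => by
    obtain ⟨x, y⟩ := p
    simp only [Prod.mk.injEq]
    constructor
    · linear_combination x * hts
    · linear_combination y * hts
  measurable_toFun := by
    show Measurable fun p : ℝ × ℝ => (t * p.1 + s * p.2, -s * p.1 + t * p.2)
    fun_prop
  measurable_invFun := by
    show Measurable fun p : ℝ × ℝ => (t * p.1 - s * p.2, s * p.1 + t * p.2)
    fun_prop

lemma rotEquiv_vol (t s : ℝ) (hts : t ^ 2 + s ^ 2 = 1) :
    Measure.map (rotEquiv t s hts) (volume : Measure (ℝ × ℝ)) = volume := by
  have hdet : LinearMap.det (Matrix.toLin (Module.Basis.finTwoProd ℝ) (Module.Basis.finTwoProd ℝ)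
      !![t, s; -s, t]) = 1 := by
    rw [LinearMap.det_toLin, Matrix.det_fin_two_of]
    linear_combination hts
  have hcoe : ⇑(rotEquiv t s hts) = ⇑(Matrix.toLin (Module.Basis.finTwoProd ℝ) (Module.Basis.finTwoProd ℝ)
      !![t, s; -s, t]) := by
    funext p
    rw [Matrix.toLin_finTwoProd_apply]
    rfl
  rw [hcoe, Measure.map_linearMap_addHaar_eq_smul_addHaar _ (by rw [hdet]; norm_num), hdet]
  norm_num
lemma gaussPDFReal_mul (a b : ℝ) :
    gaussianPDFReal 0 1 a * gaussianPDFReal 0 1 b =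
      ((Real.sqrt (2 * π))⁻¹) ^ 2 * Real.exp (-(a ^ 2 + b ^ 2) / 2) := by
  simp only [gaussianPDFReal, NNReal.coe_one, mul_one, sub_zero]
  rw [show -(a ^ 2 + b ^ 2) / 2 = -a ^ 2 / 2 + -b ^ 2 / 2 by ring, Real.exp_add]
  ring

lemma gaussianPDF_rot (t s : ℝ) (hts : t ^ 2 + s ^ 2 = 1) (p : ℝ × ℝ) :
    gaussianPDF 0 1 (t * p.1 - s * p.2) * gaussianPDF 0 1 (s * p.1 + t * p.2)
      = gaussianPDF 0 1 p.1 * gaussianPDF 0 1 p.2 := by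
  simp only [gaussianPDF]
  rw [← ENNReal.ofReal_mul (gaussianPDFReal_nonneg _ _ _),
      ← ENNReal.ofReal_mul (gaussianPDFReal_nonneg _ _ _)]
  congr 1
  rw [gaussPDFReal_mul, gaussPDFReal_mul]
  congr 2
  linear_combination (-(p.1 ^ 2) - p.2 ^ 2) / 2 * hts

lemma rot_map (t s : ℝ) (hts : t ^ 2 + s ^ 2 = 1) :
    Measure.map (fun p : ℝ × ℝ => t * p.1 + s * p.2)
      ((gaussianReal 0 1).prod (gaussianReal 0 1)) = gaussianReal 0 1 := by
  set e := rotEquiv t s hts with he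
  have hρ : Measurable fun p : ℝ × ℝ => gaussianPDF 0 1 p.1 * gaussianPDF 0 1 p.2 := by
    exact ((measurable_gaussianPDF 0 1).comp measurable_fst).mul
      ((measurable_gaussianPDF 0 1).comp measurable_snd)
  have hmapgg : Measure.map (⇑e) ((gaussianReal 0 1).prod (gaussianReal 0 1))
      = (gaussianReal 0 1).prod (gaussianReal 0 1) := by
    rw [gauss_prod_withDensity, map_withDensity_equiv e volume hρ, rotEquiv_vol t s hts]
    congr 1
    funext p
    exact gaussianPDF_rot t s hts p
  have hfst : (fun p : ℝ × ℝ => t * p.1 + s * p.2) = Prod.fst ∘ ⇑e := rfl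
  rw [hfst, ← Measure.map_map measurable_fst e.measurable, hmapgg, Measure.map_fst_prod]
  simp
lemma rot_map_pi (N : ℕ) (t s : ℝ) (hts : t ^ 2 + s ^ 2 = 1) :
    Measure.map (fun p : (Fin N → ℝ) × (Fin N → ℝ) => fun i => t * p.1 i + s * p.2 i)
      ((stdGaussianPi (Fin N)).prod (stdGaussianPi (Fin N))) = stdGaussianPi (Fin N) := by
  have h1 : MeasurePreserving (MeasurableEquiv.arrowProdEquivProdArrow ℝ ℝ (Fin N)).symm
      ((Measure.pi fun _ => gaussianReal 0 1).prod (Measure.pi fun _ => gaussianReal 0 1))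
      (Measure.pi fun _ : Fin N => (gaussianReal 0 1).prod (gaussianReal 0 1)) :=
    MeasurePreserving.symm _ (measurePreserving_arrowProdEquivProdArrow ℝ ℝ (Fin N) _ _)
  have h2 : MeasurePreserving (fun (q : Fin N → ℝ × ℝ) (i : Fin N) => t * (q i).1 + s * (q i).2)
      (Measure.pi fun _ => (gaussianReal 0 1).prod (gaussianReal 0 1))
      (Measure.pi fun _ => gaussianReal 0 1) :=
    measurePreserving_pi _ _ (fun _ => ⟨by fun_prop, rot_map t s hts⟩)
  exact (h2.comp h1).map_eq

lemma pi_map_eval (N : ℕ) (j : Fin N) :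
    (stdGaussianPi (Fin N)).map (fun x => x j) = gaussianReal 0 1 := by
  ext A hA
  rw [Measure.map_apply (measurable_pi_apply j) hA]
  have hpre : (fun x : Fin N → ℝ => x j) ⁻¹' A
      = Set.pi Set.univ (Function.update (fun _ : Fin N => (Set.univ : Set ℝ)) j A) := by
    ext x
    simp only [Set.mem_preimage, Set.mem_univ_pi]
    constructor
    · intro h i
      rcases eq_or_ne i j with rfl | hij
      · simpa using h
      · simp [Function.update_of_ne hij]
    · intro h
      simpa using h j
  rw [hpre, stdGaussianPi, Measure.pi_pi]
  rw [Finset.prod_eq_single j]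
  · simp
  · intro b _ hbj
    simp [Function.update_of_ne hbj]
  · simp

lemma integrable_sq_gaussweight : Integrable (fun x : ℝ => x ^ 2 * Real.exp (-(2⁻¹ : ℝ) * x ^ 2)) := by
  refine Integrable.mono' ((integrable_exp_neg_mul_sq (by norm_num : (0:ℝ) < 4⁻¹)).const_mul 4)
    (((measurable_id.pow_const 2).mul (((measurable_id.pow_const 2).const_mul _).exp)).aestronglyMeasurable) (ae_of_all _ fun x => ?_)
  have h1 : x ^ 2 ≤ 4 * Real.exp (4⁻¹ * x ^ 2) := by
    nlinarith [Real.add_one_le_exp (4⁻¹ * x ^ 2), Real.exp_pos (4⁻¹ * x ^ 2), sq_nonneg x]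
  have h2 : Real.exp (-(4⁻¹ : ℝ) * x ^ 2) = Real.exp (4⁻¹ * x ^ 2) * Real.exp (-(2⁻¹ : ℝ) * x ^ 2) := by
    rw [← Real.exp_add]; ring_nf
  rw [Real.norm_eq_abs, abs_of_nonneg (by positivity)]
  calc x ^ 2 * Real.exp (-(2⁻¹ : ℝ) * x ^ 2)
      ≤ 4 * Real.exp (4⁻¹ * x ^ 2) * Real.exp (-(2⁻¹ : ℝ) * x ^ 2) :=
        mul_le_mul_of_nonneg_right h1 (Real.exp_pos _).le
    _ = 4 * Real.exp (-(4⁻¹ : ℝ) * x ^ 2) := by rw [h2]; ring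

lemma memℒp_id_gauss : MemLp (fun x : ℝ => x) 2 (gaussianReal 0 1) := by
  have hiff := memLp_two_iff_integrable_sq (f := fun x : ℝ => x) (μ := gaussianReal 0 1) aestronglyMeasurable_id
  rw [hiff]
  rw [gaussianReal_of_var_ne_zero 0 one_ne_zero]
  rw [integrable_withDensity_iff (measurable_gaussianPDF 0 1)
    (ae_of_all _ fun x => by rw [gaussianPDF_def]; exact ENNReal.ofReal_lt_top)]
  have : (fun x : ℝ => x ^ 2 * (gaussianPDF 0 1 x).toReal)
      = fun x => (Real.sqrt (2 * π))⁻¹ * (x ^ 2 * Real.exp (-(2⁻¹ : ℝ) * x ^ 2)) := by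
    funext x
    rw [gaussianPDF_def, ENNReal.toReal_ofReal (gaussianPDFReal_nonneg _ _ _)]
    simp only [gaussianPDFReal, NNReal.coe_one, mul_one, sub_zero]
    ring_nf
  rw [this]
  exact integrable_sq_gaussweight.const_mul _
lemma memℒp_eval (N : ℕ) (j : Fin N) :
    MemLp (fun x : Fin N → ℝ => x j) 2 (stdGaussianPi (Fin N)) := by
  have h := memℒp_id_gauss
  rw [← pi_map_eval N j] at h
  exact (memLp_map_measure_iff aestronglyMeasurable_id
    (measurable_pi_apply j).aemeasurable).mp h

lemma memℒp_linear (N : ℕ) (c : Fin N → ℝ) :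
    MemLp (fun x : Fin N → ℝ => ∑ j, c j * x j) 2 (stdGaussianPi (Fin N)) :=
  memLp_finset_sum Finset.univ (fun j _ => (memℒp_eval N j).const_mul (c j))

theorem stmt_10 (N : ℕ) (hN : 0 < N) (v : Fin N → Fin N → ℝ)
    (hv : ∀ i, ∑ j, (v i j) ^ 2 ≤ 1)
    (X : Fin N → (Fin N → ℝ) → ℝ) (hX : X = fun i x => ∑ j, v i j * x j)
    (M : (Fin N → ℝ) → ℝ)
    (hM : M = fun x => Finset.univ.sup' ⟨⟨0, hN⟩, Finset.mem_univ _⟩ fun i => X i x)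
    (m σ2 : ℝ)
    (hm : m = ∫ x, M x ∂(stdGaussianPi (Fin N)))
    (hσ : σ2 = variance M (stdGaussianPi (Fin N)))
    (t : ℝ) (ht0 : 0 < t) (ht1 : t < 1) (lam : ℝ) (hlam : 0 < lam) :
    ((stdGaussianPi (Fin N)).prod (stdGaussianPi (Fin N)))
        {p : (Fin N → ℝ) × (Fin N → ℝ) | ∃ i,
          t * m ≤ X i p.1 ∧
          Real.sqrt (1 - t ^ 2) * m + lam / Real.sqrt (1 - t ^ 2) ≤ X i p.2} ≤
      ENNReal.ofReal (σ2 / lam ^ 2) := by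
  have ht2 : 0 < 1 - t ^ 2 := by nlinarith
  set s := Real.sqrt (1 - t ^ 2) with hsdef
  have hs0 : 0 < s := Real.sqrt_pos.mpr ht2
  have hs2 : s ^ 2 = 1 - t ^ 2 := Real.sq_sqrt ht2.le
  have hts : t ^ 2 + s ^ 2 = 1 := by rw [hs2]; ring
  have hXmeas : ∀ i, Measurable (X i) := by
    intro i
    rw [hX]
    exact Finset.measurable_sum _ fun j _ => (measurable_pi_apply j).const_mul _
  have hMeq : M = Finset.univ.sup' ⟨⟨0, hN⟩, Finset.mem_univ _⟩ X := by
    funext x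
    simp only [hM, Finset.sup'_apply]
    exact (Finset.sup'_apply (C := fun _ => ℝ) _ _ _).symm
  have hMmeas : Measurable M := by
    rw [hMeq]
    exact Finset.measurable_sup' _ (fun i _ => hXmeas i)
  have hXi2 : ∀ i, MemLp (X i) 2 (stdGaussianPi (Fin N)) := by
    intro i
    rw [hX]
    exact memℒp_linear N (v i)
  have hM2 : MemLp M 2 (stdGaussianPi (Fin N)) := by
    have hB : MemLp (fun x => ∑ i, ‖X i x‖) 2 (stdGaussianPi (Fin N)) :=
      memLp_finset_sum Finset.univ (fun i _ => (hXi2 i).norm)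
    refine hB.of_le hMmeas.aestronglyMeasurable (ae_of_all _ fun x => ?_)
    simp only [hM, Real.norm_eq_abs]
    have hsum0 : (0:ℝ) ≤ ∑ i, |X i x| := Finset.sum_nonneg fun i _ => abs_nonneg _
    rw [abs_of_nonneg hsum0, abs_le]
    constructor
    · have h1 : X ⟨0, hN⟩ x ≤ Finset.univ.sup' ⟨⟨0, hN⟩, Finset.mem_univ _⟩ fun i => X i x :=
        Finset.le_sup' (fun i => X i x) (Finset.mem_univ (⟨0, hN⟩ : Fin N))
      have h2 : |X ⟨0, hN⟩ x| ≤ ∑ i, |X i x| :=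
        Finset.single_le_sum (f := fun i => |X i x|) (fun i _ => abs_nonneg _)
          (Finset.mem_univ (⟨0, hN⟩ : Fin N))
      have := neg_abs_le (X ⟨0, hN⟩ x)
      linarith
    · refine Finset.sup'_le _ _ fun i _ => le_trans (le_abs_self _) ?_
      exact Finset.single_le_sum (f := fun i => |X i x|) (fun i _ => abs_nonneg _)
        (Finset.mem_univ i)
  have hTmeas : Measurable (fun p : (Fin N → ℝ) × (Fin N → ℝ) => fun i => t * p.1 i + s * p.2 i) := by
    refine measurable_pi_iff.mpr fun i => ?_
    fun_prop
  have hSmeas : MeasurableSet {x : Fin N → ℝ | m + lam ≤ M x} :=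
    measurableSet_le measurable_const hMmeas
  have hsub : {p : (Fin N → ℝ) × (Fin N → ℝ) | ∃ i,
        t * m ≤ X i p.1 ∧ s * m + lam / s ≤ X i p.2} ⊆
      (fun p : (Fin N → ℝ) × (Fin N → ℝ) => fun i => t * p.1 i + s * p.2 i) ⁻¹'
        {x : Fin N → ℝ | m + lam ≤ M x} := by
    rintro p ⟨i, h1, h2⟩
    show m + lam ≤ M (fun i => t * p.1 i + s * p.2 i)
    have hXiT : X i (fun i => t * p.1 i + s * p.2 i) = t * X i p.1 + s * X i p.2 := by
      simp only [hX]
      rw [Finset.mul_sum, Finset.mul_sum, ← Finset.sum_add_distrib]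
      exact Finset.sum_congr rfl fun j _ => by ring
    have e1 : t * (t * m) ≤ t * X i p.1 := mul_le_mul_of_nonneg_left h1 ht0.le
    have e2 : s * (s * m + lam / s) ≤ s * X i p.2 := mul_le_mul_of_nonneg_left h2 hs0.le
    have e3 : s * (s * m + lam / s) = s ^ 2 * m + lam := by
      field_simp
    have e4 : t * (t * m) + (s ^ 2 * m + lam) = m + lam := by linear_combination m * hts
    have hle : m + lam ≤ X i (fun i => t * p.1 i + s * p.2 i) := by
      rw [hXiT]
      linarith
    refine le_trans hle ?_
    simp only [hM]
    exact Finset.le_sup' (fun i' => X i' fun i => t * p.1 i + s * p.2 i) (Finset.mem_univ i)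
  calc ((stdGaussianPi (Fin N)).prod (stdGaussianPi (Fin N)))
        {p : (Fin N → ℝ) × (Fin N → ℝ) | ∃ i,
          t * m ≤ X i p.1 ∧ s * m + lam / s ≤ X i p.2}
      ≤ ((stdGaussianPi (Fin N)).prod (stdGaussianPi (Fin N)))
        ((fun p : (Fin N → ℝ) × (Fin N → ℝ) => fun i => t * p.1 i + s * p.2 i) ⁻¹'
          {x : Fin N → ℝ | m + lam ≤ M x}) := measure_mono hsub
    _ = (stdGaussianPi (Fin N)) {x : Fin N → ℝ | m + lam ≤ M x} := by
        rw [← Measure.map_apply hTmeas hSmeas, rot_map_pi N t s hts]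
    _ ≤ (stdGaussianPi (Fin N)) {x : Fin N → ℝ | lam ≤ |M x - m|} := by
        refine measure_mono fun x hx => ?_
        simp only [Set.mem_setOf_eq] at hx ⊢
        calc lam ≤ M x - m := by linarith
          _ ≤ |M x - m| := le_abs_self _
    _ ≤ ENNReal.ofReal (σ2 / lam ^ 2) := by
        have hcheb := meas_ge_le_variance_div_sq (μ := stdGaussianPi (Fin N)) hM2 hlam
        rw [← hm] at hcheb
        rw [hσ]
        exact hcheb
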